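/- Let a ∈ (0,1], δ > 0, and p ∈ (1,∞), and set ⟨t⟩ = √(1+t²). There exists a constant C > 0 such that for every measurable function g : (0,∞) → [0,∞], (∫_2^∞ ( ⟨t⟩^a ∫_{t/2}^{t−1} (t−τ)^{−(a+δ)} g(τ) dτ )^p dt)^{1/p} ≤ C (∫_0^∞ (⟨τ⟩ g(τ))^p dτ)^{1/p}. -/

import Mathlib

/-! On the region `t/2 ≤ τ ≤ t - 1`, the kernel `⟨t⟩^a (t-τ)^(-(a+δ)) ⟨τ⟩⁻¹` is dominated by the
convolution kernel `2^a (t-τ)^(-1-δ) 1_{t-τ ≥ 1}`: indeed `⟨t⟩ ≤ 2⟨τ⟩`, and `t - τ ≤ τ ≤ ⟨τ⟩`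
with `a ≤ 1` gives `⟨τ⟩^(a-1) ≤ (t-τ)^(a-1)`. By translation invariance this kernel has all row
and column integrals equal to `2^a / δ`, so Schur's test (Hölder in `τ`, then Tonelli) gives the
`L^p` bound for `⟨τ⟩ g(τ)` with constant `2^a / δ`. -/

open MeasureTheory Set
open scoped ENNReal

section SchurTest

variable {α β : Type*} [MeasurableSpace α] [MeasurableSpace β] {μ : Measure α} {ν : Measure β}

theorem ENNReal.rpow_lintegral_mul_le {p : ℝ} (hp : 1 < p) {w h : β → ℝ≥0∞}
    (hw : AEMeasurable w ν) (hh : AEMeasurable h ν) :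
    (∫⁻ y, w y * h y ∂ν) ^ p ≤ (∫⁻ y, w y ∂ν) ^ (p - 1) * ∫⁻ y, w y * h y ^ p ∂ν := by
  set q := p.conjExponent
  have hpq : p.HolderConjugate q := .conjExponent hp
  have hp0 : 0 < p := hpq.pos
  have hq0 : 0 < q := hpq.symm.pos
  have hsplit : ∀ y, w y * h y = (w y ^ (1 / p) * h y) * w y ^ (1 / q) := fun y => by
    rw [mul_right_comm, ← ENNReal.rpow_add_of_nonneg _ _ hpq.one_div_nonneg
      hpq.symm.one_div_nonneg, hpq.one_div_add_one_div, div_one, ENNReal.rpow_one]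
  calc (∫⁻ y, w y * h y ∂ν) ^ p
      = (∫⁻ y, (w y ^ (1 / p) * h y) * w y ^ (1 / q) ∂ν) ^ p := by simp_rw [← hsplit]
    _ ≤ ((∫⁻ y, (w y ^ (1 / p) * h y) ^ p ∂ν) ^ (1 / p) *
          (∫⁻ y, (w y ^ (1 / q)) ^ q ∂ν) ^ (1 / q)) ^ p := by
        gcongr
        exact ENNReal.lintegral_mul_le_Lp_mul_Lq ν hpq ((hw.pow_const _).mul hh)
          (hw.pow_const _)
    _ = (∫⁻ y, w y ∂ν) ^ (p - 1) * ∫⁻ y, w y * h y ^ p ∂ν := by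
        simp_rw [ENNReal.mul_rpow_of_nonneg _ _ hp0.le, ← ENNReal.rpow_mul,
          one_div_mul_cancel hp0.ne', one_div_mul_cancel hq0.ne', ENNReal.rpow_one]
        have hexp : 1 / q * p = p - 1 := by
          field_simp; linarith [hpq.sub_one_mul_conj]
        rw [mul_comm, hexp]

theorem lintegral_rpow_lintegral_mul_le_of_schur [SFinite μ] [SFinite ν] {p : ℝ} (hp : 1 < p)
    {k : α → β → ℝ≥0∞} (hk : Measurable (Function.uncurry k)) {h : β → ℝ≥0∞} (hh : Measurable h)
    {A B : ℝ≥0∞} (hrow : ∀ x, ∫⁻ y, k x y ∂ν ≤ A) (hcol : ∀ y, ∫⁻ x, k x y ∂μ ≤ B) :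
    ∫⁻ x, (∫⁻ y, k x y * h y ∂ν) ^ p ∂μ ≤ A ^ (p - 1) * B * ∫⁻ y, h y ^ p ∂ν := by
  have hkh : Measurable (Function.uncurry fun x y => k x y * h y ^ p) :=
    hk.mul ((hh.pow_const p).comp measurable_snd)
  calc ∫⁻ x, (∫⁻ y, k x y * h y ∂ν) ^ p ∂μ
      ≤ ∫⁻ x, A ^ (p - 1) * ∫⁻ y, k x y * h y ^ p ∂ν ∂μ := by
        refine lintegral_mono fun x => ?_
        refine (ENNReal.rpow_lintegral_mul_le hp hk.of_uncurry_left.aemeasurable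
          hh.aemeasurable).trans ?_
        gcongr
        exact hrow x
    _ = A ^ (p - 1) * ∫⁻ y, (∫⁻ x, k x y ∂μ) * h y ^ p ∂ν := by
        have hint : Measurable fun x => ∫⁻ y, k x y * h y ^ p ∂ν := hkh.lintegral_prod_right'
        rw [lintegral_const_mul _ hint, lintegral_lintegral_swap hkh.aemeasurable]
        simp_rw [lintegral_mul_const _ hk.of_uncurry_right]
    _ ≤ A ^ (p - 1) * ∫⁻ y, B * h y ^ p ∂ν := by gcongr with y; exact hcol y
    _ = A ^ (p - 1) * B * ∫⁻ y, h y ^ p ∂ν := by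
        rw [lintegral_const_mul _ (hh.pow_const p), mul_assoc]

theorem rpow_lintegral_rpow_lintegral_mul_le_of_schur [SFinite μ] [SFinite ν] {p : ℝ}
    (hp : 1 < p) {k : α → β → ℝ≥0∞} (hk : Measurable (Function.uncurry k)) {h : β → ℝ≥0∞}
    (hh : Measurable h) {K : ℝ≥0∞} (hrow : ∀ x, ∫⁻ y, k x y ∂ν ≤ K)
    (hcol : ∀ y, ∫⁻ x, k x y ∂μ ≤ K) :
    (∫⁻ x, (∫⁻ y, k x y * h y ∂ν) ^ p ∂μ) ^ (1 / p) ≤ K * (∫⁻ y, h y ^ p ∂ν) ^ (1 / p) := by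
  have hp0 : 0 < p := by linarith
  have hK : K ^ (p - 1) * K = K ^ p := by
    nth_rw 2 [← ENNReal.rpow_one K]
    rw [← ENNReal.rpow_add_of_nonneg _ _ (by linarith) zero_le_one, sub_add_cancel]
  calc (∫⁻ x, (∫⁻ y, k x y * h y ∂ν) ^ p ∂μ) ^ (1 / p)
      ≤ (K ^ p * ∫⁻ y, h y ^ p ∂ν) ^ (1 / p) := by
        gcongr
        exact (lintegral_rpow_lintegral_mul_le_of_schur hp hk hh hrow hcol).trans_eq (by rw [hK])
    _ = K * (∫⁻ y, h y ^ p ∂ν) ^ (1 / p) := by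
        rw [ENNReal.mul_rpow_of_nonneg _ _ (by positivity), ← ENNReal.rpow_mul,
          mul_one_div_cancel hp0.ne', ENNReal.rpow_one]

end SchurTest

noncomputable def powerTail (δ s : ℝ) : ℝ≥0∞ :=
  (Ici 1).indicator (fun s => ENNReal.ofReal (s ^ (-1 - δ))) s

theorem measurable_powerTail (δ : ℝ) : Measurable (powerTail δ) :=
  (ENNReal.measurable_ofReal.comp (measurable_id.pow_const _)).indicator measurableSet_Ici

theorem lintegral_powerTail {δ : ℝ} (hδ : 0 < δ) : ∫⁻ s, powerTail δ s = ENNReal.ofReal δ⁻¹ := by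
  have hint : IntegrableOn (fun s : ℝ => s ^ (-1 - δ)) (Ioi 1) :=
    integrableOn_Ioi_rpow_of_lt (by linarith) one_pos
  have hnonneg : 0 ≤ᵐ[volume.restrict (Ioi 1)] fun s : ℝ => s ^ (-1 - δ) :=
    (ae_restrict_iff' measurableSet_Ioi).2 (ae_of_all _ fun s hs => Real.rpow_nonneg
      (zero_le_one.trans (le_of_lt hs)) _)
  unfold powerTail
  rw [lintegral_indicator measurableSet_Ici, ← setLIntegral_congr Ioi_ae_eq_Ici,
    ← ofReal_integral_eq_lintegral_ofReal hint hnonneg,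
    integral_Ioi_rpow_of_lt (by linarith) one_pos, Real.one_rpow, show -1 - δ + 1 = -δ by ring,
    neg_div_neg_eq, one_div]

theorem sqrt_one_add_sq_le_two_mul {t τ : ℝ} (ht : 0 ≤ t) (htτ : t ≤ 2 * τ) :
    √(1 + t ^ 2) ≤ 2 * √(1 + τ ^ 2) := by
  rw [Real.sqrt_le_left (by positivity), mul_pow, Real.sq_sqrt (by positivity)]
  nlinarith

theorem sqrt_one_add_sq_rpow_mul_rpow_le {a δ t τ : ℝ} (ha0 : 0 ≤ a) (ha1 : a ≤ 1)
    (htτ : t ≤ 2 * τ) (hτt : τ < t) :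
    √(1 + t ^ 2) ^ a * (t - τ) ^ (-(a + δ)) ≤ 2 ^ a * √(1 + τ ^ 2) * (t - τ) ^ (-1 - δ) := by
  have hs : 0 < t - τ := by linarith
  have hbracket : 0 < √(1 + τ ^ 2) := by positivity
  have hsτ : t - τ ≤ √(1 + τ ^ 2) :=
    Real.le_sqrt_of_sq_le (by nlinarith)
  calc √(1 + t ^ 2) ^ a * (t - τ) ^ (-(a + δ))
      ≤ (2 * √(1 + τ ^ 2)) ^ a * (t - τ) ^ (-(a + δ)) := by
        gcongr
        exact sqrt_one_add_sq_le_two_mul (by linarith) htτ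
    _ = 2 ^ a * √(1 + τ ^ 2) * (√(1 + τ ^ 2) ^ (a - 1) * (t - τ) ^ (-(a + δ))) := by
        rw [Real.mul_rpow zero_le_two hbracket.le, Real.rpow_sub_one hbracket.ne']
        field_simp
    _ ≤ 2 ^ a * √(1 + τ ^ 2) * ((t - τ) ^ (a - 1) * (t - τ) ^ (-(a + δ))) := by
        gcongr _ * (?_ * _)
        exact Real.rpow_le_rpow_of_nonpos hs hsτ (by linarith)
    _ = 2 ^ a * √(1 + τ ^ 2) * (t - τ) ^ (-1 - δ) := by
        rw [← Real.rpow_add hs]; ring_nf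

theorem ofReal_sqrt_rpow_mul_setLIntegral_Icc_le {a δ : ℝ} (ha0 : 0 ≤ a) (ha1 : a ≤ 1)
    (g : ℝ → ℝ≥0∞) (t : ℝ) :
    ENNReal.ofReal (√(1 + t ^ 2) ^ a) *
        ∫⁻ τ in Icc (t / 2) (t - 1), ENNReal.ofReal ((t - τ) ^ (-(a + δ))) * g τ
      ≤ ∫⁻ τ in Ioi 0,
          ENNReal.ofReal (2 ^ a) * powerTail δ (t - τ) * (ENNReal.ofReal √(1 + τ ^ 2) * g τ) := by
  rw [← lintegral_const_mul' _ _ ENNReal.ofReal_ne_top]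
  refine (setLIntegral_mono' measurableSet_Icc fun τ hτ => ?_).trans
    (lintegral_mono_set fun τ hτ => show 0 < τ by linarith [hτ.1, hτ.2])
  have hs : 1 ≤ t - τ := by linarith [hτ.2]
  rw [powerTail, indicator_of_mem (mem_Ici.2 hs)]
  calc ENNReal.ofReal (√(1 + t ^ 2) ^ a) * (ENNReal.ofReal ((t - τ) ^ (-(a + δ))) * g τ)
      = ENNReal.ofReal (√(1 + t ^ 2) ^ a * (t - τ) ^ (-(a + δ))) * g τ := by
        rw [ENNReal.ofReal_mul (by positivity), mul_assoc]
    _ ≤ ENNReal.ofReal (2 ^ a * √(1 + τ ^ 2) * (t - τ) ^ (-1 - δ)) * g τ := by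
        gcongr ENNReal.ofReal ?_ * _
        exact sqrt_one_add_sq_rpow_mul_rpow_le ha0 ha1 (by linarith [hτ.1]) (by linarith)
    _ = _ := by
        rw [ENNReal.ofReal_mul (by positivity), ENNReal.ofReal_mul (by positivity)]
        ring

/-- Step 2 of the proof of Proposition 4.1, scalar form: for `a ∈ (0,1]`, `δ > 0`,
`p ∈ (1,∞)`, there is `C > 0` such that for every measurable `g : (0,∞) → [0,∞]`,
`(∫_2^∞ (⟨t⟩^a ∫_{t/2}^{t-1} (t-τ)^{-(a+δ)} g(τ) dτ)^p dt)^{1/p}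
  ≤ C (∫_0^∞ (⟨τ⟩ g(τ))^p dτ)^{1/p}`, where `⟨t⟩ = √(1+t²)`. -/
theorem stmt7 (a δ p : ℝ) (ha0 : 0 < a) (ha1 : a ≤ 1) (hδ : 0 < δ) (hp : 1 < p) :
    ∃ C : ℝ, 0 < C ∧
      ∀ g : ℝ → ℝ≥0∞, Measurable g →
        (∫⁻ t in Set.Ioi (2 : ℝ),
            (ENNReal.ofReal (Real.sqrt (1 + t ^ 2) ^ a) *
              ∫⁻ τ in Set.Icc (t / 2) (t - 1),
                ENNReal.ofReal ((t - τ) ^ (-(a + δ))) * g τ) ^ p) ^ (1 / p)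
          ≤ ENNReal.ofReal C *
            (∫⁻ τ in Set.Ioi (0 : ℝ),
              (ENNReal.ofReal (Real.sqrt (1 + τ ^ 2)) * g τ) ^ p) ^ (1 / p) := by
  refine ⟨2 ^ a * δ⁻¹, by positivity, fun g hg => ?_⟩
  set C := ENNReal.ofReal (2 ^ a * δ⁻¹)
  set φ : ℝ → ℝ≥0∞ := fun s => ENNReal.ofReal (2 ^ a) * powerTail δ s
  set h : ℝ → ℝ≥0∞ := fun τ => ENNReal.ofReal √(1 + τ ^ 2) * g τ
  have hφ : ∫⁻ s, φ s = C := by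
    rw [lintegral_const_mul' _ _ ENNReal.ofReal_ne_top, lintegral_powerTail hδ,
      ← ENNReal.ofReal_mul (by positivity)]
  calc _ ≤ (∫⁻ t in Ioi 2, (∫⁻ τ in Ioi 0, φ (t - τ) * h τ) ^ p) ^ (1 / p) := by
        gcongr with t
        exact ofReal_sqrt_rpow_mul_setLIntegral_Icc_le ha0.le ha1 g t
    _ ≤ C * (∫⁻ τ in Ioi 0, h τ ^ p) ^ (1 / p) :=
        rpow_lintegral_rpow_lintegral_mul_le_of_schur (k := fun t τ => φ (t - τ)) (h := h) hp
          ((measurable_const.mul (measurable_powerTail δ)).comp measurable_sub)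
          ((by fun_prop : Measurable fun τ : ℝ => ENNReal.ofReal √(1 + τ ^ 2)).mul hg)
          (fun t => (setLIntegral_le_lintegral _ _).trans_eq
            ((lintegral_sub_left_eq_self φ t).trans hφ))
          (fun τ => (setLIntegral_le_lintegral _ _).trans_eq
            ((lintegral_sub_right_eq_self φ τ).trans hφ))
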